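/- arXiv:1006.3842 — 5 statements merged into one kernel-verified Lean document; each statement's English description precedes it below -/
import Mathlib

section
/- If a, b, c are real with a b c > 0, then for all real θ, φ, the quantity Q(θ,φ) = [2(ac−b) + 2(bc−a) cos θ] cos φ + 2(bc−a) sin θ sin φ + 2(ab−c) cos θ + a² + b² + c² + 1 is nonnegative. -/
theorem stmt_5 (a b c : ℝ) (habc : a * b * c > 0)
    (hC : ∀ θ : ℝ, a ^ 2 + b ^ 2 + c ^ 2 + 1 + 2 * (a * b - c) * Real.cos θ ≥ 0) :
    ∀ θ φ : ℝ,
      (2 * (a * c - b) + 2 * (b * c - a) * Real.cos θ) * Real.cos φ +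
        2 * (b * c - a) * Real.sin θ * Real.sin φ +
        2 * (a * b - c) * Real.cos θ + a ^ 2 + b ^ 2 + c ^ 2 + 1 ≥ 0 := by
  intro θ φ
  have h1 : Real.sin θ ^ 2 + Real.cos θ ^ 2 = 1 := Real.sin_sq_add_cos_sq θ
  have h2 : Real.sin φ ^ 2 + Real.cos φ ^ 2 = 1 := Real.sin_sq_add_cos_sq φ
  have hCθ := hC θ
  set ct := Real.cos θ with hct
  set st := Real.sin θ with hst
  set cp := Real.cos φ with hcp
  set sp := Real.sin φ with hsp
  set C := a ^ 2 + b ^ 2 + c ^ 2 + 1 + 2 * (a * b - c) * ct with hCdef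
  set A := 2 * (a * c - b) + 2 * (b * c - a) * ct with hA
  set B := 2 * (b * c - a) * st with hB
  -- key: C^2 - A^2 - B^2 = (L + 2 ct (ab+c))^2 + 16 abc st^2 ≥ 0
  have hkey : C ^ 2 - A ^ 2 - B ^ 2 ≥ 0 := by
    have h3 : C ^ 2 - A ^ 2 - B ^ 2 =
        (a ^ 2 + b ^ 2 - c ^ 2 - 1 + 2 * ct * (a * b + c)) ^ 2 + 16 * (a * b * c) * st ^ 2 := by
      rw [hCdef, hA, hB]
      linear_combination (-(4 * (b * c - a) ^ 2) - 16 * (a * b * c)) * h1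
    rw [h3]
    have := mul_nonneg (le_of_lt habc) (sq_nonneg st)
    nlinarith [sq_nonneg (a ^ 2 + b ^ 2 - c ^ 2 - 1 + 2 * ct * (a * b + c))]
  -- bound |A cp + B sp| ≤ sqrt(A²+B²) ≤ C
  have hX : (A * cp + B * sp) ^ 2 ≤ A ^ 2 + B ^ 2 := by
    nlinarith [sq_nonneg (A * sp - B * cp), h2, sq_nonneg A, sq_nonneg B]
  have goal : C + (A * cp + B * sp) ≥ 0 := by
    nlinarith [hCθ, hkey, hX]
  calc (2 * (a * c - b) + 2 * (b * c - a) * ct) * cp +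
        2 * (b * c - a) * st * sp +
        2 * (a * b - c) * ct + a ^ 2 + b ^ 2 + c ^ 2 + 1
      = C + (A * cp + B * sp) := by rw [hCdef, hA, hB]; ring
    _ ≥ 0 := goal
end

section
/- If a, b, c are real with a b c > 0, a²+b²+c²+1+2(ab−c)cos θ ≥ 0 for all θ, and Q(θ,φ) = 0 for Q as in the characteristic polynomial of the 1×1 Fisher graph, then sin θ = 0 and sin φ = 0. -/
set_option maxHeartbeats 1600000 in
theorem stmt_6 (a b c : ℝ) (habc : a * b * c > 0)
    (hC : ∀ θ : ℝ, a ^ 2 + b ^ 2 + c ^ 2 + 1 + 2 * (a * b - c) * Real.cos θ ≥ 0)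
    (θ φ : ℝ)
    (hQ : (2 * (a * c - b) + 2 * (b * c - a) * Real.cos θ) * Real.cos φ +
        2 * (b * c - a) * Real.sin θ * Real.sin φ +
        2 * (a * b - c) * Real.cos θ + a ^ 2 + b ^ 2 + c ^ 2 + 1 = 0) :
    Real.sin θ = 0 ∧ Real.sin φ = 0 := by
  obtain ⟨s, hs_def⟩ : ∃ s, s = Real.sin θ := ⟨_, rfl⟩
  obtain ⟨ct, hct_def⟩ : ∃ x, x = Real.cos θ := ⟨_, rfl⟩
  obtain ⟨sφ, hsφ_def⟩ : ∃ x, x = Real.sin φ := ⟨_, rfl⟩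
  obtain ⟨cφ, hcφ_def⟩ : ∃ x, x = Real.cos φ := ⟨_, rfl⟩
  have hθ : s ^ 2 + ct ^ 2 = 1 := by rw [hs_def, hct_def]; exact Real.sin_sq_add_cos_sq θ
  have hφ : sφ ^ 2 + cφ ^ 2 = 1 := by rw [hsφ_def, hcφ_def]; exact Real.sin_sq_add_cos_sq φ
  obtain ⟨A, hA⟩ : ∃ x, x = 2 * (b * c - a) * s := ⟨_, rfl⟩
  obtain ⟨B, hB⟩ : ∃ x, x = 2 * (a * c - b) + 2 * (b * c - a) * ct := ⟨_, rfl⟩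
  obtain ⟨C, hCdef⟩ : ∃ x, x = 2 * (a * b - c) * ct + a ^ 2 + b ^ 2 + c ^ 2 + 1 := ⟨_, rfl⟩
  rw [← hs_def, ← hct_def, ← hsφ_def, ← hcφ_def] at hQ
  have hQ' : A * sφ + B * cφ + C = 0 := by
    rw [hA, hB, hCdef]; linear_combination hQ
  have hC0 : C = -(A * sφ + B * cφ) := by linarith
  -- Cauchy–Schwarz: C^2 ≤ A^2 + B^2
  have e2 : A ^ 2 + B ^ 2 - C ^ 2 = (A * cφ - B * sφ) ^ 2 := by
    rw [hC0]; linear_combination (-(A ^ 2 + B ^ 2)) * hφ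
  have hcs : C ^ 2 ≤ A ^ 2 + B ^ 2 := by linarith [e2, sq_nonneg (A * cφ - B * sφ)]
  -- key identity
  have hid : C ^ 2 - A ^ 2 - B ^ 2 =
      (2 * (a * b + c) * ct + a ^ 2 + b ^ 2 - c ^ 2 - 1) ^ 2 + 16 * (a * b * c) * s ^ 2 := by
    rw [hA, hB, hCdef]
    linear_combination (-4 * (a + b * c) ^ 2) * hθ
  have h16 : 16 * (a * b * c) * s ^ 2 ≤ 0 := by
    linarith [hid, hcs, sq_nonneg (2 * (a * b + c) * ct + a ^ 2 + b ^ 2 - c ^ 2 - 1)]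
  have hs0 : s = 0 := by
    by_contra h
    have h1 : 0 < s ^ 2 := by positivity
    have h2 : 0 < 16 * (a * b * c) * s ^ 2 := by
      apply mul_pos (by linarith) h1
    linarith
  constructor
  · rw [← hs_def]; exact hs0
  -- now A = 0
  have hA0 : A = 0 := by rw [hA, hs0]; ring
  have hQ2 : B * cφ + C = 0 := by rw [hA0] at hQ'; linarith
  have hsq : C ^ 2 - B ^ 2 ≥ 0 := by
    have hA2 : A ^ 2 = 0 := by rw [hA0]; ring
    have h4 : 16 * (a * b * c) * s ^ 2 = 0 := by rw [hs0]; ring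
    have h5 := sq_nonneg (2 * (a * b + c) * ct + a ^ 2 + b ^ 2 - c ^ 2 - 1)
    linarith [hid]
  have hC0' : C = -(B * cφ) := by linarith
  have e3 : B ^ 2 * sφ ^ 2 = B ^ 2 - C ^ 2 := by
    rw [hC0']; linear_combination (B ^ 2) * hφ
  have hBs : B ^ 2 * sφ ^ 2 ≤ 0 := by linarith
  rw [← hsφ_def]
  by_contra hsφ0
  have hsφpos : 0 < sφ ^ 2 := by positivity
  have hB0 : B = 0 := by
    by_contra hb
    have : 0 < B ^ 2 * sφ ^ 2 := mul_pos (by positivity) hsφpos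
    linarith
  have hC00 : C = 0 := by rw [hB0] at hQ2; linarith
  have hct2 : ct ^ 2 = 1 := by
    have hss : s ^ 2 = 0 := by rw [hs0]; ring
    linarith [hθ]
  have hct : ct = 1 ∨ ct = -1 := by
    rcases mul_eq_zero.mp (show (ct - 1) * (ct + 1) = 0 by linear_combination hct2) with h | h
    · left; linarith
    · right; linarith
  rcases hct with h | h
  · rw [hCdef, h] at hC00
    have hsum : (a + b) ^ 2 + (c - 1) ^ 2 = 0 := by linear_combination hC00
    have h1 : a + b = 0 := by
      have := (add_eq_zero_iff_of_nonneg (sq_nonneg (a + b)) (sq_nonneg (c - 1))).mp hsum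
      exact pow_eq_zero_iff (by norm_num) |>.mp this.1
    have h2 : c = 1 := by
      have := (add_eq_zero_iff_of_nonneg (sq_nonneg (a + b)) (sq_nonneg (c - 1))).mp hsum
      have := pow_eq_zero_iff (n := 2) (by norm_num) |>.mp this.2
      linarith
    have h3 : a = -b := by linarith
    rw [h3, h2] at habc
    have hr : -b * b * 1 = -(b * b) := by ring
    have hb2 : 0 ≤ b * b := mul_self_nonneg b
    linarith
  · rw [hCdef, h] at hC00
    have hsum : (a - b) ^ 2 + (c + 1) ^ 2 = 0 := by linear_combination hC00
    have h1 : a - b = 0 := by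
      have := (add_eq_zero_iff_of_nonneg (sq_nonneg (a - b)) (sq_nonneg (c + 1))).mp hsum
      exact pow_eq_zero_iff (by norm_num) |>.mp this.1
    have h2 : c = -1 := by
      have := (add_eq_zero_iff_of_nonneg (sq_nonneg (a - b)) (sq_nonneg (c + 1))).mp hsum
      have := pow_eq_zero_iff (n := 2) (by norm_num) |>.mp this.2
      linarith
    have h3 : a = b := by linarith
    rw [h3, h2] at habc
    have hr : b * b * -1 = -(b * b) := by ring
    have hb2 : 0 ≤ b * b := mul_self_nonneg b
    linarith
end

section
/- If a, b, c are real numbers satisfying (a+b−c−d)(a+c−b−d)(a+d−b−c) > 0 and a+b+c+d > 0 with d = 1, and a b c < 0, then for all real θ, φ the quantity Q(θ,φ) = [2(ac−b)+2(bc−a)cos θ]cos φ + 2(bc−a) sin θ sin φ + 2(ab−c)cos θ + a²+b²+c²+1 is strictly positive. -/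
/-- Abstract core: positivity of `A*y + B*t + C` from the discriminant condition. -/
lemma stmt_7_aux (p q r S x s y t : ℝ)
    (hx : s ^ 2 + x ^ 2 = 1) (hy : t ^ 2 + y ^ 2 = 1)
    (hx1 : x ≤ 1) (hx2 : -1 ≤ x)
    (hexpr : p ^ 2 * q ^ 2 + q ^ 2 * r ^ 2 + r ^ 2 * p ^ 2 - p * q * r * S < 0)
    (hC1 : 0 < S + 2 * p) (hC2 : 0 < S - 2 * p) :
    0 < (2 * q + 2 * r * x) * y + (2 * r * s) * t + (2 * p * x + S) := by
  have hp2 : 0 < p ^ 2 := by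
    rcases eq_or_ne p 0 with h | h
    · exfalso; rw [h] at hexpr; nlinarith [sq_nonneg (q * r)]
    · positivity
  have hDpos : 0 < (2 * p * x + S) ^ 2 - (2 * q + 2 * r * x) ^ 2 - (2 * r * s) ^ 2 := by
    have hid : p ^ 2 * ((2 * p * x + S) ^ 2 - (2 * q + 2 * r * x) ^ 2 - (2 * r * s) ^ 2) =
        (2 * p ^ 2 * x + p * S - 2 * q * r) ^ 2
          - 4 * (p ^ 2 * q ^ 2 + q ^ 2 * r ^ 2 + r ^ 2 * p ^ 2 - p * q * r * S)
          - 4 * p ^ 2 * r ^ 2 * (x ^ 2 + s ^ 2 - 1) := by ring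
    have hzero : x ^ 2 + s ^ 2 - 1 = 0 := by linarith
    rw [hzero] at hid
    have hpd : 0 < p ^ 2 * ((2 * p * x + S) ^ 2 - (2 * q + 2 * r * x) ^ 2 - (2 * r * s) ^ 2) := by
      rw [hid]; nlinarith [sq_nonneg (2 * p ^ 2 * x + p * S - 2 * q * r)]
    by_contra h
    push_neg at h
    nlinarith [mul_nonpos_of_nonneg_of_nonpos hp2.le h]
  have hCpos : 0 < 2 * p * x + S := by
    nlinarith [mul_nonneg (by linarith : (0:ℝ) ≤ 1 - x) hC2.le,
      mul_nonneg (by linarith : (0:ℝ) ≤ 1 + x) hC1.le]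
  have hAB : ((2 * q + 2 * r * x) * y + (2 * r * s) * t) ^ 2 ≤
      (2 * q + 2 * r * x) ^ 2 + (2 * r * s) ^ 2 := by
    nlinarith [sq_nonneg ((2 * q + 2 * r * x) * t - (2 * r * s) * y)]
  nlinarith [hAB, hDpos, hCpos]

set_option maxHeartbeats 1600000 in
theorem stmt_7 (a b c : ℝ)
    (h1 : (a + b - c - 1) * (a + c - b - 1) * (a + 1 - b - c) > 0)
    (h2 : a + b + c + 1 > 0)
    (habc : a * b * c < 0) :
    ∀ θ φ : ℝ,
      (2 * (a * c - b) + 2 * (b * c - a) * Real.cos θ) * Real.cos φ +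
        2 * (b * c - a) * Real.sin θ * Real.sin φ +
        2 * (a * b - c) * Real.cos θ + a ^ 2 + b ^ 2 + c ^ 2 + 1 > 0 := by
  intro θ φ
  have hx : Real.sin θ ^ 2 + Real.cos θ ^ 2 = 1 := Real.sin_sq_add_cos_sq θ
  have hy : Real.sin φ ^ 2 + Real.cos φ ^ 2 = 1 := Real.sin_sq_add_cos_sq φ
  have hexpr : (a * b - c) ^ 2 * (a * c - b) ^ 2 + (a * c - b) ^ 2 * (b * c - a) ^ 2 +
      (b * c - a) ^ 2 * (a * b - c) ^ 2 -
      (a * b - c) * (a * c - b) * (b * c - a) * (a ^ 2 + b ^ 2 + c ^ 2 + 1) < 0 := by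
    have key : (a * b - c) ^ 2 * (a * c - b) ^ 2 + (a * c - b) ^ 2 * (b * c - a) ^ 2 +
        (b * c - a) ^ 2 * (a * b - c) ^ 2 -
        (a * b - c) * (a * c - b) * (b * c - a) * (a ^ 2 + b ^ 2 + c ^ 2 + 1) =
        (a * b * c) * ((a + b - c - 1) * (a + c - b - 1) * (a + 1 - b - c) * (a + b + c + 1)) := by
      ring
    rw [key]
    exact mul_neg_of_neg_of_pos habc (mul_pos h1 h2)
  have hC1 : 0 < (a ^ 2 + b ^ 2 + c ^ 2 + 1) + 2 * (a * b - c) := by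
    by_contra h
    push_neg at h
    have hab : a + b = 0 := by
      have habsq : (a + b) ^ 2 = 0 := by nlinarith [sq_nonneg (c - 1), sq_nonneg (a + b)]
      exact pow_eq_zero_iff two_ne_zero |>.mp habsq
    have hc : c = 1 := by
      have hcsq : (c - 1) ^ 2 = 0 := by nlinarith [sq_nonneg (c - 1), sq_nonneg (a + b)]
      have := pow_eq_zero_iff two_ne_zero |>.mp hcsq
      linarith
    have hb : b = -a := by linarith
    rw [hb, hc] at h1
    nlinarith [sq_nonneg a]
  have hC2 : 0 < (a ^ 2 + b ^ 2 + c ^ 2 + 1) - 2 * (a * b - c) := by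
    by_contra h
    push_neg at h
    have hab : a - b = 0 := by
      have habsq : (a - b) ^ 2 = 0 := by nlinarith [sq_nonneg (c + 1), sq_nonneg (a - b)]
      exact pow_eq_zero_iff two_ne_zero |>.mp habsq
    have hc : c = -1 := by
      have hcsq : (c + 1) ^ 2 = 0 := by nlinarith [sq_nonneg (c + 1), sq_nonneg (a - b)]
      have := pow_eq_zero_iff two_ne_zero |>.mp hcsq
      linarith
    have hb : b = a := by linarith
    rw [hb, hc] at h1 h2
    nlinarith
  have := stmt_7_aux (a * b - c) (a * c - b) (b * c - a) (a ^ 2 + b ^ 2 + c ^ 2 + 1)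
    (Real.cos θ) (Real.sin θ) (Real.cos φ) (Real.sin φ)
    hx hy (Real.cos_le_one θ) (Real.neg_one_le_cos θ) hexpr hC1 hC2
  linarith [this]
end

section
/- The determinant of the 6×6 skew-symmetric matrix K(z,w) with rows/columns indexed 1..6, given by K₁₂ = c₁, K₁₃ = −b₁, K₁₄ = −1, K₂₃ = a₁, K₂₅ = −1/z, K₃₆ = −1/w, K₄₅ = c₂, K₄₆ = −b₂, K₅₆ = a₂ (and K antisymmetric, all other upper entries 0), equals (z+1/z)(ab−c) + (w+1/w)(ac−b) + (z/w+w/z)(bc−a) + a² + b² + c² + 1, where a = a₁a₂, b = b₁b₂, c = c₁c₂. -/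
theorem stmt_9 (a₁ a₂ b₁ b₂ c₁ c₂ : ℂ) (z w : ℂ) (hz : z ≠ 0) (hw : w ≠ 0) :
    Matrix.det
        !![0, c₁, -b₁, -1, 0, 0;
           -c₁, 0, a₁, 0, -1 / z, 0;
           b₁, -a₁, 0, 0, 0, -1 / w;
           1, 0, 0, 0, c₂, -b₂;
           0, z, 0, -c₂, 0, a₂;
           0, 0, w, b₂, -a₂, 0] =
      (z + 1 / z) * (a₁ * a₂ * (b₁ * b₂) - c₁ * c₂) +
        (w + 1 / w) * (a₁ * a₂ * (c₁ * c₂) - b₁ * b₂) +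
        (z / w + w / z) * (b₁ * b₂ * (c₁ * c₂) - a₁ * a₂) +
        (a₁ * a₂) ^ 2 + (b₁ * b₂) ^ 2 + (c₁ * c₂) ^ 2 + 1 := by
  simp only [Matrix.det_succ_row_zero, Fin.sum_univ_succ, Matrix.det_unique, Matrix.submatrix_apply,
    Matrix.submatrix_submatrix, Function.comp_apply, Matrix.of_apply, Matrix.cons_val, Fin.succAbove,
    Fin.reduceLT, Fin.reduceCastSucc, Fin.reduceSucc, ite_true, ite_false, mul_zero, zero_mul, add_zero,
    zero_add, Finset.univ_unique, Finset.sum_singleton, Fin.default_eq_zero, Fin.coe_ofNat_eq_mod]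
  field_simp
  ring
end

section
/- Let z₁,…,z₈ be real numbers such that the quadruples (z₁,z₄,z₆,z₇) and (z₂,z₃,z₅,z₈) each satisfy the tetrahedral inequalities z₁ ≤ z₄+z₆+z₇, z₄ ≤ z₁+z₆+z₇, z₆ ≤ z₁+z₄+z₇, z₇ ≤ z₁+z₄+z₆, z₂ ≤ z₃+z₅+z₈, z₃ ≤ z₂+z₅+z₈, z₅ ≤ z₂+z₃+z₈, z₈ ≤ z₂+z₃+z₅, and suppose these inequalities still hold after replacing each zᵢ by |zᵢ|. Then √(z₄²+z₅²)+√(z₆²+z₃²)+√(z₂²+z₇²) ≥ √(z₁²+z₈²), and more generally the sum of any three of the quantities √(z₄²+z₅²), √(z₃²+z₆²), √(z₂²+z₇²), √(z₁²+z₈²) is at least the fourth. -/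
private lemma mink (a b c d : ℝ) :
    Real.sqrt ((a + c) ^ 2 + (b + d) ^ 2) ≤
      Real.sqrt (a ^ 2 + b ^ 2) + Real.sqrt (c ^ 2 + d ^ 2) := by
  have s1 := Real.sqrt_nonneg (a ^ 2 + b ^ 2)
  have s2 := Real.sqrt_nonneg (c ^ 2 + d ^ 2)
  have e1 : Real.sqrt (a ^ 2 + b ^ 2) ^ 2 = a ^ 2 + b ^ 2 := Real.sq_sqrt (by positivity)
  have e2 : Real.sqrt (c ^ 2 + d ^ 2) ^ 2 = c ^ 2 + d ^ 2 := Real.sq_sqrt (by positivity)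
  have hcs : a * c + b * d ≤ Real.sqrt (a ^ 2 + b ^ 2) * Real.sqrt (c ^ 2 + d ^ 2) := by
    rw [← Real.sqrt_mul (by positivity)]
    calc a * c + b * d ≤ |a * c + b * d| := le_abs_self _
      _ = Real.sqrt ((a * c + b * d) ^ 2) := (Real.sqrt_sq_eq_abs _).symm
      _ ≤ Real.sqrt ((a ^ 2 + b ^ 2) * (c ^ 2 + d ^ 2)) :=
          Real.sqrt_le_sqrt (by nlinarith [sq_nonneg (a * d - b * c)])
  calc Real.sqrt ((a + c) ^ 2 + (b + d) ^ 2)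
      ≤ Real.sqrt ((Real.sqrt (a ^ 2 + b ^ 2) + Real.sqrt (c ^ 2 + d ^ 2)) ^ 2) :=
        Real.sqrt_le_sqrt (by nlinarith)
    _ = Real.sqrt (a ^ 2 + b ^ 2) + Real.sqrt (c ^ 2 + d ^ 2) := Real.sqrt_sq (by positivity)

private lemma key (a b c d e f g h : ℝ)
    (hc : 0 ≤ c) (hd : 0 ≤ d) (he : 0 ≤ e) (hf : 0 ≤ f) (hg : 0 ≤ g) (hh : 0 ≤ h)
    (hab1 : |a| ≤ c + e + g) (hab2 : |b| ≤ d + f + h) :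
    Real.sqrt (a ^ 2 + b ^ 2) ≤
      Real.sqrt (c ^ 2 + d ^ 2) + Real.sqrt (e ^ 2 + f ^ 2) + Real.sqrt (g ^ 2 + h ^ 2) := by
  have h1 : Real.sqrt (a ^ 2 + b ^ 2) ≤ Real.sqrt ((c + e + g) ^ 2 + (d + f + h) ^ 2) := by
    apply Real.sqrt_le_sqrt
    nlinarith [abs_nonneg a, abs_nonneg b, sq_abs a, sq_abs b]
  have h2 : Real.sqrt (((c + e) + g) ^ 2 + ((d + f) + h) ^ 2) ≤
      Real.sqrt ((c + e) ^ 2 + (d + f) ^ 2) + Real.sqrt (g ^ 2 + h ^ 2) := mink _ _ _ _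
  have h3 := mink c d e f
  calc Real.sqrt (a ^ 2 + b ^ 2) ≤ Real.sqrt ((c + e + g) ^ 2 + (d + f + h) ^ 2) := h1
    _ ≤ Real.sqrt ((c + e) ^ 2 + (d + f) ^ 2) + Real.sqrt (g ^ 2 + h ^ 2) := h2
    _ ≤ _ := by linarith

theorem stmt_10 (z₁ z₂ z₃ z₄ z₅ z₆ z₇ z₈ : ℝ)
    (h1 : z₁ ≤ z₄ + z₆ + z₇) (h2 : z₄ ≤ z₁ + z₆ + z₇)
    (h3 : z₆ ≤ z₁ + z₄ + z₇) (h4 : z₇ ≤ z₁ + z₄ + z₆)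
    (h5 : z₂ ≤ z₃ + z₅ + z₈) (h6 : z₃ ≤ z₂ + z₅ + z₈)
    (h7 : z₅ ≤ z₂ + z₃ + z₈) (h8 : z₈ ≤ z₂ + z₃ + z₅)
    (a1 : |z₁| ≤ |z₄| + |z₆| + |z₇|) (a2 : |z₄| ≤ |z₁| + |z₆| + |z₇|)
    (a3 : |z₆| ≤ |z₁| + |z₄| + |z₇|) (a4 : |z₇| ≤ |z₁| + |z₄| + |z₆|)
    (a5 : |z₂| ≤ |z₃| + |z₅| + |z₈|) (a6 : |z₃| ≤ |z₂| + |z₅| + |z₈|)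
    (a7 : |z₅| ≤ |z₂| + |z₃| + |z₈|) (a8 : |z₈| ≤ |z₂| + |z₃| + |z₅|) :
    Real.sqrt (z₄ ^ 2 + z₅ ^ 2) + Real.sqrt (z₆ ^ 2 + z₃ ^ 2) + Real.sqrt (z₂ ^ 2 + z₇ ^ 2)
        ≥ Real.sqrt (z₁ ^ 2 + z₈ ^ 2) ∧
      Real.sqrt (z₄ ^ 2 + z₅ ^ 2) + Real.sqrt (z₆ ^ 2 + z₃ ^ 2) + Real.sqrt (z₁ ^ 2 + z₈ ^ 2)
        ≥ Real.sqrt (z₂ ^ 2 + z₇ ^ 2) ∧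
      Real.sqrt (z₄ ^ 2 + z₅ ^ 2) + Real.sqrt (z₁ ^ 2 + z₈ ^ 2) + Real.sqrt (z₂ ^ 2 + z₇ ^ 2)
        ≥ Real.sqrt (z₃ ^ 2 + z₆ ^ 2) ∧
      Real.sqrt (z₁ ^ 2 + z₈ ^ 2) + Real.sqrt (z₆ ^ 2 + z₃ ^ 2) + Real.sqrt (z₂ ^ 2 + z₇ ^ 2)
        ≥ Real.sqrt (z₄ ^ 2 + z₅ ^ 2) := by
  have n1 := abs_nonneg z₁
  have n2 := abs_nonneg z₂
  have n3 := abs_nonneg z₃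
  have n4 := abs_nonneg z₄
  have n5 := abs_nonneg z₅
  have n6 := abs_nonneg z₆
  have n7 := abs_nonneg z₇
  have n8 := abs_nonneg z₈
  refine ⟨?_, ?_, ?_, ?_⟩
  · rw [ge_iff_le, ← sq_abs z₁, ← sq_abs z₈, ← sq_abs z₄, ← sq_abs z₅, ← sq_abs z₆,
      ← sq_abs z₃, ← sq_abs z₂, ← sq_abs z₇, add_comm (|z₂| ^ 2) (|z₇| ^ 2)]
    exact key _ _ _ _ _ _ _ _ n4 n5 n6 n3 n7 n2 (by rwa [abs_abs]) (by rw [abs_abs]; linarith)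
  · rw [ge_iff_le, ← sq_abs z₁, ← sq_abs z₈, ← sq_abs z₄, ← sq_abs z₅, ← sq_abs z₆,
      ← sq_abs z₃, ← sq_abs z₂, ← sq_abs z₇, add_comm (|z₄| ^ 2) (|z₅| ^ 2),
      add_comm (|z₆| ^ 2) (|z₃| ^ 2), add_comm (|z₁| ^ 2) (|z₈| ^ 2)]
    exact key _ _ _ _ _ _ _ _ n5 n4 n3 n6 n8 n1 (by rw [abs_abs]; linarith)
      (by rw [abs_abs]; linarith)
  · rw [ge_iff_le, ← sq_abs z₁, ← sq_abs z₈, ← sq_abs z₄, ← sq_abs z₅, ← sq_abs z₆,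
      ← sq_abs z₃, ← sq_abs z₂, ← sq_abs z₇, add_comm (|z₄| ^ 2) (|z₅| ^ 2),
      add_comm (|z₁| ^ 2) (|z₈| ^ 2)]
    exact key _ _ _ _ _ _ _ _ n5 n4 n8 n1 n2 n7 (by rw [abs_abs]; linarith)
      (by rw [abs_abs]; linarith)
  · rw [ge_iff_le, ← sq_abs z₁, ← sq_abs z₈, ← sq_abs z₄, ← sq_abs z₅, ← sq_abs z₆,
      ← sq_abs z₃, ← sq_abs z₂, ← sq_abs z₇, add_comm (|z₂| ^ 2) (|z₇| ^ 2)]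
    exact key _ _ _ _ _ _ _ _ n1 n8 n6 n3 n7 n2 (by rw [abs_abs]; linarith)
      (by rw [abs_abs]; linarith)
end
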